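/- arXiv:1709.09396 — 2 statements merged into one kernel-verified Lean document; each statement's English description precedes it below -/
import Mathlib

section
/- Let T be a contraction on a Hilbert space H whose minimal unitary dilation has absolutely continuous scalar spectral measures; concretely, suppose for all f, g ∈ H there exists u_{f,g} ∈ L¹(𝕋) with ⟨Tⁿf, g⟩ = ∫_𝕋 zⁿ u_{f,g}(z) dm(z) for all n ≥ 0, where additionally ‖u_{f,g}‖_{L¹} ≤ ‖f‖‖g‖. Then for every function φ holomorphic on a neighborhood of the closed unit disc with Taylor series φ(z) = Σ aₙ zⁿ, the operator φ̃(T) := Σ conj(aₙ) Tⁿ satisfies ‖φ̃(T)f‖ ≤ ‖φ‖_∞ ‖f‖ for all f ∈ H, where ‖φ‖_∞ = sup_{|z|≤1} |φ(z)|. -/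
/-!
Expanding `S = Σ conj(aₙ) Tⁿ` against the spectral densities gives
`⟪g, S f⟫ = (2π)⁻¹ ∫ conj (φ (e^{-iθ})) u_{f,g}(θ) dθ`; summation and integration may be
interchanged because `Σ ‖aₙ‖ < ∞`, the Taylor series converging beyond the unit circle.
Bounding `|φ|` on the circle by its supremum over the closed disc and using
`‖u_{f,g}‖₁ ≤ ‖f‖ ‖g‖` gives `‖⟪g, S f⟫‖ ≤ ‖φ‖_∞ ‖f‖ ‖g‖` for every `g`, hence the bound on `‖S f‖`.
-/

open Metric Filter MeasureTheory ComplexConjugate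

theorem summable_norm_of_summable_mul_pow {𝕜 : Type*} [NormedField 𝕜] {a : ℕ → 𝕜} {z : 𝕜}
    (h : Summable fun n => a n * z ^ n) (hz : 1 < ‖z‖) : Summable fun n => ‖a n‖ := by
  have hz0 : z ≠ 0 := norm_pos_iff.mp (one_pos.trans hz)
  have hbound : (fun n => ‖a n‖) =O[atTop] fun n => ‖z⁻¹‖ ^ n := by
    have h1 := (h.tendsto_atTop_zero.isBigO_one ℝ).norm_left.mul
      (Asymptotics.isBigO_refl (fun n => ‖z⁻¹‖ ^ n) atTop)
    refine (h1.congr_left fun n => ?_).trans (Asymptotics.isBigO_of_le _ fun n => by simp)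
    rw [← norm_pow, ← norm_mul, mul_assoc, ← mul_pow, mul_inv_cancel₀ hz0, one_pow, mul_one]
  refine summable_of_isBigO_nat (summable_geometric_of_lt_one (norm_nonneg _) ?_) hbound
  rw [norm_inv]
  exact inv_lt_one_of_one_lt₀ hz

theorem norm_le_iSup_norm_of_continuousOn {X E : Type*} [TopologicalSpace X]
    [SeminormedAddCommGroup E]
    {f : X → E} {s : Set X} (hs : IsCompact s) (hf : ContinuousOn f s) {x : X} (hx : x ∈ s) :
    ‖f x‖ ≤ ⨆ y : s, ‖f y‖ := by
  have hbdd := hs.bddAbove_image hf.norm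
  rw [Set.image_eq_range] at hbdd
  exact le_ciSup hbdd ⟨x, hx⟩

theorem norm_le_of_forall_norm_inner_le {𝕜 E : Type*} [RCLike 𝕜] [NormedAddCommGroup E]
    [InnerProductSpace 𝕜 E] {x : E} {C : ℝ} (hC : 0 ≤ C)
    (h : ∀ y : E, ‖(inner 𝕜 y x : 𝕜)‖ ≤ C * ‖y‖) : ‖x‖ ≤ C := by
  rcases (norm_nonneg x).eq_or_lt with hx | hx
  · exact hx ▸ hC
  · refine le_of_mul_le_mul_right ?_ hx
    simpa [inner_self_eq_norm_sq_to_K, sq] using h x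

section PowerSeriesIntegral

variable {α 𝕜 : Type*} [MeasurableSpace α] {μ : Measure α} [RCLike 𝕜]

theorem norm_integral_mul_le_of_norm_le {ψ v : α → 𝕜} {M : ℝ} (hv : Integrable v μ)
    (hψ : ∀ x, ‖ψ x‖ ≤ M) : ‖∫ x, ψ x * v x ∂μ‖ ≤ M * ∫ x, ‖v x‖ ∂μ := by
  rw [← integral_const_mul]
  refine norm_integral_le_of_norm_le (hv.norm.const_mul M) (ae_of_all _ fun x => ?_)
  rw [norm_mul]
  exact mul_le_mul_of_nonneg_right (hψ x) (norm_nonneg _)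

theorem hasSum_mul_integral_pow_mul {c : ℕ → 𝕜} (hc : Summable fun n => ‖c n‖) {e v ψ : α → 𝕜}
    (he : AEStronglyMeasurable e μ) (he_le : ∀ x, ‖e x‖ ≤ 1) (hv : Integrable v μ)
    (hψ : ∀ x, HasSum (fun n => c n * e x ^ n) (ψ x)) :
    HasSum (fun n => c n * ∫ x, e x ^ n * v x ∂μ) (∫ x, ψ x * v x ∂μ) := by
  have hpow_le : ∀ n x, ‖e x ^ n‖ ≤ 1 := fun n x => by
    rw [norm_pow]; exact pow_le_one₀ (norm_nonneg _) (he_le x)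
  have hint : ∀ n, Integrable (fun x => c n * (e x ^ n * v x)) μ := fun n =>
    (hv.bdd_mul (he.pow n) (ae_of_all _ (hpow_le n))).const_mul (c n)
  have hnorm_int : ∀ n, ∫ x, ‖c n * (e x ^ n * v x)‖ ∂μ ≤ ‖c n‖ * ∫ x, ‖v x‖ ∂μ := fun n => by
    rw [← integral_const_mul]
    refine integral_mono_of_nonneg (ae_of_all _ fun x => norm_nonneg _) (hv.norm.const_mul _)
      (ae_of_all _ fun x => ?_)
    simp only [norm_mul]
    gcongr
    exact mul_le_of_le_one_left (norm_nonneg _) (hpow_le n x)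
  have hsum := hasSum_integral_of_summable_integral_norm hint
    ((hc.mul_right _).of_nonneg_of_le (fun n => integral_nonneg fun x => norm_nonneg _) hnorm_int)
  have hψv : ∀ x, HasSum (fun n => c n * (e x ^ n * v x)) (ψ x * v x) := fun x => by
    simpa only [mul_assoc] using (hψ x).mul_right (v x)
  simpa only [integral_const_mul, fun x => (hψv x).tsum_eq] using hsum

end PowerSeriesIntegral

theorem inner_eq_integral_of_hasSum_conj_smul {H : Type*} [NormedAddCommGroup H]
    [InnerProductSpace ℂ H] {x : ℕ → H} {y g : H} {a : ℕ → ℂ} {φ : ℂ → ℂ} {v : ℝ → ℂ}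
    (hv : IntervalIntegrable v volume 0 (2 * Real.pi))
    (hrep : ∀ n, inner ℂ g (x n) =
      (2 * Real.pi : ℝ)⁻¹ • ∫ θ in (0:ℝ)..(2 * Real.pi), Complex.exp (θ * Complex.I) ^ n * v θ)
    (ha : Summable fun n => ‖a n‖) (hφ : ∀ z : ℂ, ‖z‖ = 1 → HasSum (fun n => a n * z ^ n) (φ z))
    (hy : HasSum (fun n => conj (a n) • x n) y) :
    inner ℂ g y = (2 * Real.pi : ℝ)⁻¹ • ∫ θ in Set.Ioc 0 (2 * Real.pi),
      conj (φ (conj (Complex.exp (θ * Complex.I)))) * v θ := by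
  have hseries := hasSum_mul_integral_pow_mul (μ := volume.restrict (Set.Ioc 0 (2 * Real.pi)))
    (c := fun n => conj (a n)) (e := fun θ : ℝ => Complex.exp (θ * Complex.I))
    (ψ := fun θ => conj (φ (conj (Complex.exp (θ * Complex.I)))))
    (by simpa using ha) (by fun_prop) (fun θ => (Complex.norm_exp_ofReal_mul_I θ).le) hv.1
    (fun θ => by
      have h := hφ (conj (Complex.exp (θ * Complex.I)))
        (by rw [RCLike.norm_conj, Complex.norm_exp_ofReal_mul_I])
      simpa only [map_mul, map_pow, Complex.conj_conj] using Complex.hasSum_conj'.mpr h)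
  have hinner : HasSum (fun n => conj (a n) * inner ℂ g (x n)) (inner ℂ g y) := by
    simpa [inner_smul_right] using hy.mapL (innerSL ℂ g)
  simp only [hrep, intervalIntegral.integral_of_le (by positivity : (0 : ℝ) ≤ 2 * Real.pi),
    mul_smul_comm] at hinner
  exact hinner.unique (hseries.const_smul _)

theorem stmt7_general
    {H : Type*}
    [NormedAddCommGroup H] [InnerProductSpace ℂ H]
    (T : H →L[ℂ] H)
    -- densities of the scalar spectral measures (parametrized on [0, 2π])
    (u : H → H → ℝ → ℂ)
    (hu_int : ∀ f g : H,
      IntervalIntegrable (u f g) MeasureTheory.volume 0 (2*Real.pi))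
    (hu_rep : ∀ (f g : H) (n : ℕ), (inner ℂ g ((T^n) f) : ℂ) =
      (2*Real.pi : ℝ)⁻¹ • ∫ θ in (0:ℝ)..(2*Real.pi),
        Complex.exp ((θ:ℂ) * Complex.I)^n * u f g θ)
    (hu_norm : ∀ f g : H,
      (2*Real.pi)⁻¹ * (∫ θ in (0:ℝ)..(2*Real.pi), ‖u f g θ‖) ≤ ‖f‖ * ‖g‖)
    -- φ is holomorphic on a disc of radius R > 1, with Taylor coefficients a
    (φ : ℂ → ℂ) (R : ℝ) (hR : 1 < R)
    (hφ : DifferentiableOn ℂ φ (ball (0:ℂ) R))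
    (a : ℕ → ℂ) (ha : ∀ z : ℂ, ‖z‖ < R → HasSum (fun n => a n * z^n) (φ z))
    -- S = φ̃(T) = Σ conj(aₙ) Tⁿ
    (S : H →L[ℂ] H)
    (hS : ∀ f : H, HasSum (fun n => (starRingEnd ℂ) (a n) • (T^n) f) (S f)) :
    ∀ f : H, ‖S f‖ ≤ (⨆ z : closedBall (0:ℂ) 1, ‖φ z‖) * ‖f‖ := by
  intro f
  set M := ⨆ z : closedBall (0:ℂ) 1, ‖φ z‖
  have hM : ∀ z : ℂ, ‖z‖ ≤ 1 → ‖φ z‖ ≤ M := fun z hz =>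
    norm_le_iSup_norm_of_continuousOn (isCompact_closedBall 0 1)
      (hφ.continuousOn.mono (closedBall_subset_ball hR)) (mem_closedBall_zero_iff.mpr hz)
  have hM0 : 0 ≤ M := Real.iSup_nonneg fun _ => norm_nonneg _
  obtain ⟨t, ht1, htR⟩ := exists_between hR
  have ha_summable : Summable fun n => ‖a n‖ := by
    refine summable_norm_of_summable_mul_pow (z := (t : ℂ)) (ha t ?_).summable ?_ <;>
      rwa [Complex.norm_real, Real.norm_of_nonneg (by linarith)]
  refine norm_le_of_forall_norm_inner_le (𝕜 := ℂ) (mul_nonneg hM0 (norm_nonneg f)) fun g => ?_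
  rw [inner_eq_integral_of_hasSum_conj_smul (hu_int f g) (hu_rep f g) ha_summable
    (fun z hz => ha z (hz.trans_lt hR)) (hS f), norm_smul, Real.norm_of_nonneg (by positivity)]
  have hu_norm' := hu_norm f g
  rw [intervalIntegral.integral_of_le (by positivity)] at hu_norm'
  calc _ ≤ (2 * Real.pi)⁻¹ * (M * ∫ θ in Set.Ioc 0 (2 * Real.pi), ‖u f g θ‖) := by
        gcongr
        refine norm_integral_mul_le_of_norm_le (hu_int f g).1 fun θ => ?_
        rw [RCLike.norm_conj]
        exact hM _ (by rw [RCLike.norm_conj, Complex.norm_exp_ofReal_mul_I])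
    _ = M * ((2 * Real.pi)⁻¹ * ∫ θ in Set.Ioc 0 (2 * Real.pi), ‖u f g θ‖) := by ring
    _ ≤ M * (‖f‖ * ‖g‖) := by gcongr
    _ = M * ‖f‖ * ‖g‖ := (mul_assoc ..).symm

/-- a contraction whose minimal unitary dilation has absolutely
continuous scalar spectral measures satisfies the von Neumann-type inequality
`‖φ̃(T)f‖ ≤ ‖φ‖_∞ ‖f‖` for `φ̃(T) = Σ conj(aₙ) Tⁿ`, with `φ` holomorphic on a
neighborhood of the closed unit disc with Taylor coefficients `aₙ`. -/
theorem stmt7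
    {H : Type*}
    [NormedAddCommGroup H] [InnerProductSpace ℂ H] [CompleteSpace H]
    (T : H →L[ℂ] H) (hT : ‖T‖ ≤ 1)
    -- densities of the scalar spectral measures (parametrized on [0, 2π])
    (u : H → H → ℝ → ℂ)
    (hu_int : ∀ f g : H,
      IntervalIntegrable (u f g) MeasureTheory.volume 0 (2*Real.pi))
    (hu_rep : ∀ (f g : H) (n : ℕ), (inner ℂ g ((T^n) f) : ℂ) =
      (2*Real.pi : ℝ)⁻¹ • ∫ θ in (0:ℝ)..(2*Real.pi),
        Complex.exp ((θ:ℂ) * Complex.I)^n * u f g θ)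
    (hu_norm : ∀ f g : H,
      (2*Real.pi)⁻¹ * (∫ θ in (0:ℝ)..(2*Real.pi), ‖u f g θ‖) ≤ ‖f‖ * ‖g‖)
    -- φ is holomorphic on a disc of radius R > 1, with Taylor coefficients a
    (φ : ℂ → ℂ) (R : ℝ) (hR : 1 < R)
    (hφ : DifferentiableOn ℂ φ (ball (0:ℂ) R))
    (a : ℕ → ℂ) (ha : ∀ z : ℂ, ‖z‖ < R → HasSum (fun n => a n * z^n) (φ z))
    -- S = φ̃(T) = Σ conj(aₙ) Tⁿ
    (S : H →L[ℂ] H)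
    (hS : ∀ f : H, HasSum (fun n => (starRingEnd ℂ) (a n) • (T^n) f) (S f)) :
    ∀ f : H, ‖S f‖ ≤ (⨆ z : closedBall (0:ℂ) 1, ‖φ z‖) * ‖f‖ :=
  stmt7_general T u hu_int hu_rep hu_norm φ R hR hφ a ha S hS
end

section
/- Let X₁, X₂, Y be Hilbert spaces and A : X₁ → Y, B : X₂ → Y bounded operators. Then the range spaces M(A) and M(B) coincide as sets with equal norms if and only if AA* = BB*. -/
open ContinuousLinearMap

/-- The range norm on `M(T) = range T`. -/
noncomputable def rangeNorm {X Y : Type*}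
    [NormedAddCommGroup X] [InnerProductSpace ℂ X]
    [NormedAddCommGroup Y] [InnerProductSpace ℂ Y]
    (T : X →L[ℂ] Y) (y : Y) : ℝ :=
  sInf {c : ℝ | ∃ x : X, T x = y ∧ ‖x‖ = c}

/-!
Both sides amount to `‖A* z‖ = ‖B* z‖` for every `z`. For the right-hand side this is
polarization, since `⟪A A* z, z⟫ = ‖A* z‖²`. For the left-hand side, the range space is
determined by the function `z ↦ ‖A* z‖`: the equation `A x = y` has a solution with `‖x‖ ≤ c`
exactly when `|⟪y, z⟫| ≤ c ‖A* z‖` for all `z` (Cauchy–Schwarz one way, Hahn–Banach and Riesz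
the other). Conversely, testing this bound at `y = B B* z` recovers `‖B* z‖ ≤ ‖A* z‖` from a
contractive inclusion `M(B) ⊆ M(A)`.
-/

open scoped InnerProductSpace

section Adjoint

variable {𝕜 E F G : Type*} [RCLike 𝕜]
  [NormedAddCommGroup E] [InnerProductSpace 𝕜 E] [CompleteSpace E]
  [NormedAddCommGroup F] [InnerProductSpace 𝕜 F] [CompleteSpace F]
  [NormedAddCommGroup G] [InnerProductSpace 𝕜 G] [CompleteSpace G]

theorem inner_comp_adjoint_apply_self (A : E →L[𝕜] G) (z : G) :
    ⟪(A ∘L adjoint A) z, z⟫_𝕜 = (‖adjoint A z‖ : 𝕜) ^ 2 := by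
  rw [comp_apply, ← adjoint_inner_right, inner_self_eq_norm_sq_to_K]

theorem comp_adjoint_eq_iff_norm_adjoint_apply_eq (A : E →L[𝕜] G) (B : F →L[𝕜] G) :
    A ∘L adjoint A = B ∘L adjoint B ↔ ∀ z, ‖adjoint A z‖ = ‖adjoint B z‖ := by
  constructor
  · intro h z
    have hsq : (‖adjoint A z‖ : 𝕜) ^ 2 = (‖adjoint B z‖ : 𝕜) ^ 2 := by
      rw [← inner_comp_adjoint_apply_self, ← inner_comp_adjoint_apply_self, h]
    exact (pow_left_inj₀ (norm_nonneg _) (norm_nonneg _) two_ne_zero).1 (mod_cast hsq)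
  · intro h
    have hsymm : ((A ∘L adjoint A - B ∘L adjoint B : G →L[𝕜] G) : G →ₗ[𝕜] G).IsSymmetric :=
      ((isPositive_self_comp_adjoint A).isSelfAdjoint.sub
        (isPositive_self_comp_adjoint B).isSelfAdjoint).isSymmetric
    rw [← sub_eq_zero, ← coe_inj, toLinearMap_zero, ← hsymm.inner_map_self_eq_zero]
    intro z
    simp only [coe_coe, sub_apply, inner_sub_left, inner_comp_adjoint_apply_self, h, sub_self]

/-- The functional `adjoint A z ↦ ⟪y, z⟫` is well defined and bounded by `c` on the range of
`adjoint A`; a norm-preserving Hahn–Banach extension is represented by the required `x`. -/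
theorem exists_apply_eq_norm_le_of_norm_inner_le (A : E →L[𝕜] G) {y : G} {c : ℝ} (hc : 0 ≤ c)
    (hb : ∀ z, ‖⟪y, z⟫_𝕜‖ ≤ c * ‖adjoint A z‖) : ∃ x, A x = y ∧ ‖x‖ ≤ c := by
  set L : G →ₗ[𝕜] E := (adjoint A).toLinearMap
  have hker : LinearMap.ker L ≤ LinearMap.ker (innerSL 𝕜 y : G →ₗ[𝕜] 𝕜) := by
    intro z hz
    simpa [show adjoint A z = 0 from hz] using hb z
  let f : LinearMap.range L →ₗ[𝕜] 𝕜 :=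
    (LinearMap.ker L).liftQ _ hker ∘ₗ L.quotKerEquivRange.symm.toLinearMap
  have hf : ∀ z, f ⟨L z, LinearMap.mem_range_self L z⟩ = ⟪y, z⟫_𝕜 := fun z => by
    simp [f, LinearMap.quotKerEquivRange_symm_apply_image]
  have hbound : ∀ u, ‖f u‖ ≤ c * ‖u‖ := by
    rintro ⟨_, z, rfl⟩
    rw [hf]
    exact hb z
  obtain ⟨g, hg, hg_norm⟩ := exists_extension_norm_eq _ (f.mkContinuous c hbound)
  refine ⟨(InnerProductSpace.toDual 𝕜 E).symm g, ext_inner_right 𝕜 fun z => ?_, ?_⟩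
  · rw [← adjoint_inner_right, InnerProductSpace.toDual_symm_apply]
    exact (hg ⟨L z, LinearMap.mem_range_self L z⟩).trans (hf z)
  · rw [LinearIsometryEquiv.norm_map, hg_norm]
    exact LinearMap.mkContinuous_norm_le f hc hbound

end Adjoint

section RangeNorm

variable {X X' Y : Type*}
  [NormedAddCommGroup X] [InnerProductSpace ℂ X]
  [NormedAddCommGroup X'] [InnerProductSpace ℂ X']
  [NormedAddCommGroup Y] [InnerProductSpace ℂ Y]

theorem rangeNorm_nonneg (T : X →L[ℂ] Y) (y : Y) : 0 ≤ rangeNorm T y :=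
  Real.sInf_nonneg fun _ ⟨x, _, hx⟩ => hx ▸ norm_nonneg x

theorem rangeNorm_le_norm {T : X →L[ℂ] Y} {x : X} {y : Y} (h : T x = y) :
    rangeNorm T y ≤ ‖x‖ :=
  csInf_le ⟨0, fun _ ⟨x, _, hx⟩ => hx ▸ norm_nonneg x⟩ ⟨x, h, rfl⟩

theorem rangeNorm_of_notMem_range {T : X →L[ℂ] Y} {y : Y}
    (hy : y ∉ LinearMap.range (T : X →ₗ[ℂ] Y)) : rangeNorm T y = 0 := by
  have hempty : {c : ℝ | ∃ x : X, T x = y ∧ ‖x‖ = c} = ∅ :=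
    Set.eq_empty_of_forall_notMem fun _ ⟨x, hx, _⟩ => hy ⟨x, hx⟩
  rw [rangeNorm, hempty, Real.sInf_empty]

variable [CompleteSpace X] [CompleteSpace X'] [CompleteSpace Y]

theorem norm_inner_le_rangeNorm_mul (T : X →L[ℂ] Y) {y : Y}
    (hy : y ∈ LinearMap.range (T : X →ₗ[ℂ] Y)) (z : Y) :
    ‖⟪y, z⟫_ℂ‖ ≤ rangeNorm T y * ‖adjoint T z‖ := by
  obtain ⟨x₀, hx₀⟩ := hy
  rw [mul_comm, ← smul_eq_mul, rangeNorm, ← Real.sInf_smul_of_nonneg (norm_nonneg _)]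
  refine le_csInf ⟨_, Set.smul_mem_smul_set ⟨x₀, hx₀, rfl⟩⟩ ?_
  rintro _ ⟨_, ⟨x, rfl, rfl⟩, rfl⟩
  rw [← adjoint_inner_right]
  exact (norm_inner_le_norm _ _).trans_eq (mul_comm _ _)

theorem mem_range_and_rangeNorm_le_iff (T : X →L[ℂ] Y) {y : Y} {c : ℝ} (hc : 0 ≤ c) :
    y ∈ LinearMap.range (T : X →ₗ[ℂ] Y) ∧ rangeNorm T y ≤ c ↔
      ∀ z, ‖⟪y, z⟫_ℂ‖ ≤ c * ‖adjoint T z‖ := by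
  constructor
  · rintro ⟨hy, hle⟩ z
    exact (norm_inner_le_rangeNorm_mul T hy z).trans (by gcongr)
  · intro hb
    obtain ⟨x, rfl, hx⟩ := exists_apply_eq_norm_le_of_norm_inner_le T hc hb
    exact ⟨LinearMap.mem_range_self _ x, (rangeNorm_le_norm rfl).trans hx⟩

theorem range_le_and_rangeNorm_le_iff (A : X →L[ℂ] Y) (B : X' →L[ℂ] Y) :
    (LinearMap.range (B : X' →ₗ[ℂ] Y) ≤ LinearMap.range (A : X →ₗ[ℂ] Y) ∧
      ∀ y ∈ LinearMap.range (B : X' →ₗ[ℂ] Y), rangeNorm A y ≤ rangeNorm B y) ↔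
      ∀ z, ‖adjoint B z‖ ≤ ‖adjoint A z‖ := by
  constructor
  · rintro ⟨hr, hn⟩ z
    set x := adjoint B z
    have hBx : B x ∈ LinearMap.range (B : X' →ₗ[ℂ] Y) := LinearMap.mem_range_self _ x
    have hsq : ‖x‖ * ‖x‖ ≤ ‖x‖ * ‖adjoint A z‖ :=
      calc ‖x‖ * ‖x‖ = ‖⟪B x, z⟫_ℂ‖ := by
            rw [← adjoint_inner_right, ← inner_self_re_eq_norm, inner_self_eq_norm_mul_norm]
        _ ≤ rangeNorm A (B x) * ‖adjoint A z‖ := norm_inner_le_rangeNorm_mul A (hr hBx) z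
        _ ≤ rangeNorm B (B x) * ‖adjoint A z‖ := by gcongr; exact hn _ hBx
        _ ≤ ‖x‖ * ‖adjoint A z‖ := by gcongr; exact rangeNorm_le_norm rfl
    rcases (norm_nonneg x).eq_or_lt with hx | hx
    · exact hx ▸ norm_nonneg _
    · exact le_of_mul_le_mul_left hsq hx
  · intro h
    have hB : ∀ y ∈ LinearMap.range (B : X' →ₗ[ℂ] Y),
        y ∈ LinearMap.range (A : X →ₗ[ℂ] Y) ∧ rangeNorm A y ≤ rangeNorm B y := fun y hy =>
      (mem_range_and_rangeNorm_le_iff A (rangeNorm_nonneg B y)).2 fun z =>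
        ((mem_range_and_rangeNorm_le_iff B (rangeNorm_nonneg B y)).1 ⟨hy, le_rfl⟩ z).trans
          (mul_le_mul_of_nonneg_left (h z) (rangeNorm_nonneg B y))
    exact ⟨fun y hy => (hB y hy).1, fun y hy => (hB y hy).2⟩

end RangeNorm

/-- Douglas: `M(A) ≐ M(B)` (equal ranges with equal range norms)
if and only if `A A* = B B*`. -/
theorem stmt13 {X₁ X₂ Y : Type*}
    [NormedAddCommGroup X₁] [InnerProductSpace ℂ X₁] [CompleteSpace X₁]
    [NormedAddCommGroup X₂] [InnerProductSpace ℂ X₂] [CompleteSpace X₂]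
    [NormedAddCommGroup Y] [InnerProductSpace ℂ Y] [CompleteSpace Y]
    (A : X₁ →L[ℂ] Y) (B : X₂ →L[ℂ] Y) :
    (LinearMap.range (A : X₁ →ₗ[ℂ] Y) = LinearMap.range (B : X₂ →ₗ[ℂ] Y) ∧
      ∀ y : Y, rangeNorm A y = rangeNorm B y) ↔
    A ∘L adjoint A = B ∘L adjoint B := by
  rw [comp_adjoint_eq_iff_norm_adjoint_apply_eq]
  have hBA := range_le_and_rangeNorm_le_iff A B
  have hAB := range_le_and_rangeNorm_le_iff B A
  constructor
  · rintro ⟨hr, hn⟩ z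
    exact le_antisymm (hAB.1 ⟨hr.le, fun y _ => (hn y).ge⟩ z)
      (hBA.1 ⟨hr.ge, fun y _ => (hn y).le⟩ z)
  · intro h
    obtain ⟨hBA_range, hBA_norm⟩ := hBA.2 fun z => (h z).ge
    obtain ⟨hAB_range, hAB_norm⟩ := hAB.2 fun z => (h z).le
    have hr := le_antisymm hAB_range hBA_range
    refine ⟨hr, fun y => ?_⟩
    by_cases hy : y ∈ LinearMap.range (A : X₁ →ₗ[ℂ] Y)
    · exact le_antisymm (hBA_norm y (hr ▸ hy)) (hAB_norm y hy)
    · rw [rangeNorm_of_notMem_range hy, rangeNorm_of_notMem_range (hr ▸ hy)]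
end
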